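/- For any pseudo-differential operators Q = Σ_i f_i ∂^i and R = Σ_j g_j ∂^j (in D⁻, or in D⁺ whenever both sides make sense), one has res_z( (Q e^{zx}) · (R* e^{−zx}) ) = res(Q·R), where res_z extracts the coefficient of z⁻¹ of the formal series in z obtained by dividing out e^{zx}·e^{−zx}. -/

import Mathlib

/-!
STATEMENT 10: For pseudo-differential operators Q = Σ_i f_i ∂^i and
R = Σ_j g_j ∂^j (in D⁻, or more generally whenever both sides make sense),
res_z( (Q e^{zx}) · (R* e^{−zx}) ) = res(Q·R).

A series is modelled by its coefficient function ℤ → A.  One has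
Q e^{zx} = Σ_i f_i z^i e^{zx} and R* e^{−zx} = Σ_j (R*)_j (−z)^j e^{−zx}, so
that the coefficient of z^{-1} of the product (after dividing out
e^{zx}e^{−zx}) is Σ_{i+j=−1} f_i (−1)^j (R*)_j; the adjoint is determined by
(f∂^i)* = (−∂)^i f.
-/

/-- Generalized binomial coefficient `C(i,r)` for an integer `i`. -/
def zbinom (i : ℤ) (r : ℕ) : ℤ :=
  if 0 ≤ i then ((i.toNat).choose r : ℤ)
  else (-1 : ℤ) ^ r * ((((r : ℤ) - i - 1).toNat).choose r : ℤ)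

/-- `(−1)^i` for an integer `i`. -/
def negOnePow (i : ℤ) : ℤ := if Even i then 1 else -1

/-- The summand of the coefficient of `∂^n` in the product of two series. -/
def pdoTerm {A : Type*} [CommRing A] (d : A → A) (F G : ℤ → A) (n : ℤ) :
    ℤ × ℤ → A := fun p =>
  if n ≤ p.1 + p.2 then
    zbinom p.1 (p.1 + p.2 - n).toNat •
      (F p.1 * d^[(p.1 + p.2 - n).toNat] (G p.2))
  else 0

/-- The product of two formal pseudo-differential operators, coefficientwise. -/
noncomputable def pdoMul {A : Type*} [CommRing A] (d : A → A) (F G : ℤ → A) :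
    ℤ → A := fun n => ∑ᶠ p : ℤ × ℤ, pdoTerm d F G n p

/-- The summand of the coefficient of `∂^n` of the formal adjoint
`F* = Σ_i (−∂)^i f_i`. -/
def starTerm {A : Type*} [CommRing A] (d : A → A) (F : ℤ → A) (n : ℤ) :
    ℤ → A := fun i =>
  if n ≤ i then
    (negOnePow i * zbinom i (i - n).toNat) • d^[(i - n).toNat] (F i)
  else 0

/-- The formal adjoint `F*`, coefficientwise. -/
noncomputable def pdoStar {A : Type*} [CommRing A] (d : A → A) (F : ℤ → A) :
    ℤ → A := fun n => ∑ᶠ i : ℤ, starTerm d F n i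

/-- The summand (indexed by `i`) of the coefficient of `z^{-1}` in
`(Q e^{zx})·(R* e^{−zx})`, namely `Q_i · (−1)^{−1−i} (R*)_{−1−i}`. -/
noncomputable def reszTerm {A : Type*} [CommRing A] (d : A → A) (Q R : ℤ → A) :
    ℤ → A := fun i =>
  Q i * (negOnePow (-1 - i) • pdoStar d R (-1 - i))

/-- Membership in `D⁻`: the support of the coefficients is bounded above. -/
def isDm {A : Type*} [CommRing A] (F : ℤ → A) : Prop :=
  ∃ N : ℤ, ∀ i : ℤ, N < i → F i = 0

/-
The coefficient `f_i (−1)^{−1−i} (R*)_{−1−i}` of `z^{−1}` expands, through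
`R* = Σ_j (−∂)^j g_j`, into a sum over `j` of `±C(j,r) f_i ∂^r g_j` with `r = i + j + 1`.
The reflection `(−1)^r C(j,r) = C(i,r)` for `i + j = r − 1` makes this the `(i,j)` term of
`res(Q·R)`, and exchanging the two finite sums gives the identity. For operators in `D⁻`
every sum involved is supported in a bounded interval or box.
-/

lemma negOnePow_neg_one_sub_mul_negOnePow {i j : ℤ} {r : ℕ} (h : (r : ℤ) = i + j + 1) :
    negOnePow (-1 - i) * negOnePow j = (-1 : ℤ) ^ r := by
  rcases Nat.mod_two_eq_zero_or_one r with hr | hr <;>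
    simp only [negOnePow, Int.even_iff, neg_one_pow_eq_pow_mod_two (R := ℤ) r, hr] <;>
    split_ifs <;> first | rfl | omega

lemma neg_one_pow_mul_zbinom {i j : ℤ} {r : ℕ} (h : (r : ℤ) = i + j + 1) :
    (-1 : ℤ) ^ r * zbinom j r = zbinom i r := by
  unfold zbinom
  by_cases hi : 0 ≤ i <;> by_cases hj : 0 ≤ j
  · rw [if_pos hi, if_pos hj, Nat.choose_eq_zero_of_lt (by omega),
      Nat.choose_eq_zero_of_lt (by omega)]
    ring
  · rw [if_pos hi, if_neg hj, show ((r : ℤ) - j - 1).toNat = i.toNat by omega, ← mul_assoc,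
      ← pow_add, Even.neg_one_pow ⟨r, rfl⟩, one_mul]
  · rw [if_neg hi, if_pos hj, show ((r : ℤ) - i - 1).toNat = j.toNat by omega]
  · omega

section

variable {A : Type*} [CommRing A] (d : A → A)

lemma mul_smul_starTerm_eq_pdoTerm (Q R : ℤ → A) (i j : ℤ) :
    Q i * (negOnePow (-1 - i) • starTerm d R (-1 - i) j) = pdoTerm d Q R (-1) (i, j) := by
  unfold starTerm pdoTerm
  by_cases h : -1 - i ≤ j
  · rw [if_pos h, if_pos (by omega), show (j - (-1 - i)).toNat = (i + j - -1).toNat by omega]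
    have hr : ((i + j - -1).toNat : ℤ) = i + j + 1 := by omega
    rw [smul_smul, mul_smul_comm, ← mul_assoc, negOnePow_neg_one_sub_mul_negOnePow hr,
      neg_one_pow_mul_zbinom hr]
  · rw [if_neg h, if_neg (by omega), smul_zero, mul_zero]

lemma reszTerm_eq_finsum_pdoTerm {Q R : ℤ → A} {i : ℤ}
    (hR : (Function.support (starTerm d R (-1 - i))).Finite) :
    reszTerm d Q R i = ∑ᶠ j : ℤ, pdoTerm d Q R (-1) (i, j) := by
  have hsmul : (Function.support fun j => negOnePow (-1 - i) • starTerm d R (-1 - i) j).Finite :=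
    hR.subset (Function.support_const_smul_subset (negOnePow (-1 - i)) (starTerm d R (-1 - i)))
  rw [reszTerm, pdoStar, smul_finsum' _ hR, mul_finsum' _ _ hsmul]
  exact finsum_congr (mul_smul_starTerm_eq_pdoTerm d Q R i)

theorem finsum_reszTerm_eq_pdoMul {Q R : ℤ → A}
    (hR : ∀ n : ℤ, (Function.support (starTerm d R n)).Finite)
    (hQR : (Function.support (pdoTerm d Q R (-1))).Finite) :
    ∑ᶠ i : ℤ, reszTerm d Q R i = pdoMul d Q R (-1) := by
  rw [finsum_congr fun i => reszTerm_eq_finsum_pdoTerm d (hR (-1 - i)), pdoMul,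
    finsum_curry _ hQR]

variable {d} {Q R : ℤ → A} {M N : ℤ}

lemma support_starTerm_subset_Icc (hd : d 0 = 0) (hR : ∀ j : ℤ, N < j → R j = 0) (n : ℤ) :
    Function.support (starTerm d R n) ⊆ Set.Icc n N := by
  refine Function.support_subset_iff'.mpr fun j hj => ?_
  unfold starTerm
  split_ifs with hnj
  · rw [hR j (by simp only [Set.mem_Icc, not_and, not_le] at hj; exact hj hnj),
      Function.iterate_fixed hd, smul_zero]
  · rfl

lemma pdoStar_eq_zero_of_lt (hd : d 0 = 0) (hR : ∀ j : ℤ, N < j → R j = 0)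
    {n : ℤ} (hn : N < n) : pdoStar d R n = 0 := by
  refine finsum_eq_zero_of_forall_eq_zero fun j => ?_
  by_contra hj
  have := support_starTerm_subset_Icc hd hR n hj
  simp only [Set.mem_Icc] at this
  omega

lemma support_reszTerm_subset_Icc (hd : d 0 = 0) (hQ : ∀ i : ℤ, M < i → Q i = 0)
    (hR : ∀ j : ℤ, N < j → R j = 0) :
    Function.support (reszTerm d Q R) ⊆ Set.Icc (-1 - N) M := by
  refine Function.support_subset_iff'.mpr fun i hi => ?_
  simp only [Set.mem_Icc, not_and_or, not_le] at hi
  rcases hi with hi | hi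
  · rw [reszTerm, pdoStar_eq_zero_of_lt hd hR (by omega), smul_zero, mul_zero]
  · rw [reszTerm, hQ i hi, zero_mul]

lemma support_pdoTerm_subset (hd : d 0 = 0) (hQ : ∀ i : ℤ, M < i → Q i = 0)
    (hR : ∀ j : ℤ, N < j → R j = 0) (n : ℤ) :
    Function.support (pdoTerm d Q R n) ⊆ Set.Icc (n - N) M ×ˢ Set.Icc (n - M) N := by
  refine Function.support_subset_iff'.mpr fun ⟨i, j⟩ hij => ?_
  unfold pdoTerm
  split_ifs with hn
  · by_cases hi : M < i
    · rw [hQ i hi, zero_mul, smul_zero]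
    by_cases hj : N < j
    · rw [hR j hj, Function.iterate_fixed hd, mul_zero, smul_zero]
    simp only [Set.mem_prod, Set.mem_Icc] at hij
    omega
  · rfl

end

theorem stmt_10 {K : Type*} [Field K]
    {A : Type*} [CommRing A] [Algebra K A] (d : Derivation K A A) :
    -- for operators in D⁻ both sides automatically make sense …
    (∀ Q R : ℤ → A, isDm Q → isDm R →
      ((∀ n : ℤ, (Function.support (starTerm (⇑d) R n)).Finite) ∧
       (Function.support (reszTerm (⇑d) Q R)).Finite ∧
       (Function.support (pdoTerm (⇑d) Q R (-1))).Finite)) ∧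
    -- … and whenever both sides make sense,
    --  res_z((Q e^{zx})·(R* e^{−zx})) = res(Q·R).
    (∀ Q R : ℤ → A,
      (∀ n : ℤ, (Function.support (starTerm (⇑d) R n)).Finite) →
      (Function.support (reszTerm (⇑d) Q R)).Finite →
      (Function.support (pdoTerm (⇑d) Q R (-1))).Finite →
      ∑ᶠ i : ℤ, reszTerm (⇑d) Q R i = pdoMul (⇑d) Q R (-1)) := by
  refine ⟨fun Q R ⟨M, hQ⟩ ⟨N, hR⟩ => ?_,
    fun Q R hR _ hQR => finsum_reszTerm_eq_pdoMul d hR hQR⟩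
  have hd : d 0 = 0 := map_zero d
  exact ⟨fun n => (Set.finite_Icc n N).subset (support_starTerm_subset_Icc hd hR n),
    (Set.finite_Icc _ _).subset (support_reszTerm_subset_Icc hd hQ hR),
    ((Set.finite_Icc _ _).prod (Set.finite_Icc _ _)).subset (support_pdoTerm_subset hd hQ hR _)⟩
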